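/- For every n ≥ 1, pspa'(n) - pspa(n) ≡ spa'(n) - spa(n) (mod 3). -/
import Mathlib


def spa : ℕ → ℕ
  | 0 => 1
  | 1 => 0
  | n + 2 => if (n + 2) % 2 = 0 then spa ((n + 2) / 2) else spa n + spa (n - 1)
decreasing_by all_goals omega

def spa' : ℕ → ℕ
  | 0 => 0
  | 1 => 1
  | n + 2 => if (n + 2) % 2 = 0 then spa' ((n + 2) / 2) else spa' n + spa' (n - 1)
decreasing_by all_goals omega

def pspa : ℕ → ℕ
  | 0 => 0
  | 1 => 0
  | 2 => 0
  | 3 => 1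
  | n + 4 =>
    if (n + 4) % 2 = 0 then pspa ((n + 4) / 2)
    else pspa (n + 2) + pspa (n + 1) + 3 * spa (n + 1)
decreasing_by all_goals omega

def pspa' : ℕ → ℕ
  | 0 => 0
  | 1 => 1
  | 2 => 1
  | 3 => 1
  | n + 4 =>
    if (n + 4) % 2 = 0 then pspa' ((n + 4) / 2)
    else pspa' (n + 2) + pspa' (n + 1) + 3 * spa' (n + 1)
decreasing_by all_goals omega

lemma pspa_mod (n : ℕ) (hn : 1 ≤ n) : ((pspa n : ℤ) : ZMod 3) = ((spa n : ℤ) : ZMod 3) := by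
  induction n using Nat.strong_induction_on with
  | _ n ih =>
    match n, hn with
    | 1, _ => simp [pspa, spa]
    | 2, _ => simp [pspa, spa]
    | 3, _ => simp [pspa, spa]
    | (m + 4), _ =>
      rcases Nat.even_or_odd (m + 4) with he | ho
      · have h2 : (m + 4) % 2 = 0 := Nat.even_iff.mp he
        have e1 : pspa (m + 4) = pspa ((m + 4) / 2) := by rw [pspa, if_pos (by omega)]
        have e2 : spa (m + 4) = spa ((m + 4) / 2) := by
          show spa ((m + 2) + 2) = _
          rw [spa, if_pos (by omega)]
        rw [e1, e2]
        exact ih ((m + 4) / 2) (by omega) (by omega)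
      · have h2 : ¬ (m + 4) % 2 = 0 := by
          have := Nat.odd_iff.mp ho; omega
        have e1 : pspa (m + 4) = pspa (m + 2) + pspa (m + 1) + 3 * spa (m + 1) := by
          rw [pspa, if_neg (by omega)]
        have e2 : spa (m + 4) = spa (m + 2) + spa (m + 1) := by
          show spa ((m + 2) + 2) = _
          rw [spa, if_neg (by omega)]; rfl
        rw [e1, e2]
        push_cast
        have i1 := ih (m + 2) (by omega) (by omega)
        have i2 := ih (m + 1) (by omega) (by omega)
        push_cast at i1 i2
        rw [i1, i2]
        have : (3 : ZMod 3) = 0 := rfl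
        rw [this]; ring

lemma pspa'_mod (n : ℕ) (hn : 1 ≤ n) : ((pspa' n : ℤ) : ZMod 3) = ((spa' n : ℤ) : ZMod 3) := by
  induction n using Nat.strong_induction_on with
  | _ n ih =>
    match n, hn with
    | 1, _ => simp [pspa', spa']
    | 2, _ => simp [pspa', spa']
    | 3, _ => simp [pspa', spa']
    | (m + 4), _ =>
      rcases Nat.even_or_odd (m + 4) with he | ho
      · have h2 : (m + 4) % 2 = 0 := Nat.even_iff.mp he
        have e1 : pspa' (m + 4) = pspa' ((m + 4) / 2) := by rw [pspa', if_pos (by omega)]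
        have e2 : spa' (m + 4) = spa' ((m + 4) / 2) := by
          show spa' ((m + 2) + 2) = _
          rw [spa', if_pos (by omega)]
        rw [e1, e2]
        exact ih ((m + 4) / 2) (by omega) (by omega)
      · have h2 : ¬ (m + 4) % 2 = 0 := by
          have := Nat.odd_iff.mp ho; omega
        have e1 : pspa' (m + 4) = pspa' (m + 2) + pspa' (m + 1) + 3 * spa' (m + 1) := by
          rw [pspa', if_neg (by omega)]
        have e2 : spa' (m + 4) = spa' (m + 2) + spa' (m + 1) := by
          show spa' ((m + 2) + 2) = _
          rw [spa', if_neg (by omega)]; rfl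
        rw [e1, e2]
        push_cast
        have i1 := ih (m + 2) (by omega) (by omega)
        have i2 := ih (m + 1) (by omega) (by omega)
        push_cast at i1 i2
        rw [i1, i2]
        have : (3 : ZMod 3) = 0 := rfl
        rw [this]; ring

theorem pspa_diff_cong (n : ℕ) (hn : 1 ≤ n) :
    (pspa' n : ℤ) - (pspa n : ℤ) ≡ (spa' n : ℤ) - (spa n : ℤ) [ZMOD 3] := by
  have h1 := pspa_mod n hn
  have h2 := pspa'_mod n hn
  rw [Int.ModEq]
  have : (((pspa' n : ℤ) - (pspa n : ℤ) : ℤ) : ZMod 3) = (((spa' n : ℤ) - (spa n : ℤ) : ℤ) : ZMod 3) := by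
    push_cast at h1 h2 ⊢
    rw [h1, h2]
  exact (ZMod.intCast_eq_intCast_iff _ _ _).mp this
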